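/- arXiv:1103.0047 — 2 statements merged into one kernel-verified Lean document; each statement's English description precedes it below -/
import Mathlib

section
/- For 1 ≤ p < ∞ there exist positive constants A_p and B_p such that for every n and all real coefficients a_1,…,a_n, A_p (∑ a_i²)^{1/2} ≤ (Ave_± |∑ ±a_i|^p)^{1/p} ≤ B_p (∑ a_i²)^{1/2}, where the average is over all 2^n choices of signs. -/
/-!
Write `S = ∑ ±aᵢ` and `Q = ∑ aᵢ²`. Splitting off the first sign and expanding binomially (the odd
powers of that sign average out), induction on `n` gives `E S² = Q` and `E S²ᵏ ≤ (2k)! Qᵏ`. Power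
means increase with the exponent, so for `p ≤ 2k` the `p`-th moment is at most `((2k)!)^(1/2k) √Q`.
For the lower bound, Hölder interpolation `(E S²)³ ≤ (E|S|)² E S⁴` and `E S⁴ ≤ 24 Q²` give
`E|S| ≥ √Q / √24`, and `E|S|` is at most the `p`-th power mean for `p ≥ 1`.
-/

open Finset
open scoped Nat

theorem Nat.choose_mul_factorial_le_factorial (n k : ℕ) : n.choose k * k ! ≤ n ! := by
  rcases le_or_gt k n with hk | hk
  · rw [← Nat.choose_mul_factorial_mul_factorial hk]
    exact Nat.le_mul_of_pos_right _ (Nat.factorial_pos _)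
  · simp [Nat.choose_eq_zero_of_lt hk]

theorem Finset.sum_range_two_mul_add_one_of_odd {M : Type*} [AddCommMonoid M] (k : ℕ)
    (f : ℕ → M) (hf : ∀ m, Odd m → f m = 0) :
    ∑ m ∈ range (2 * k + 1), f m = ∑ j ∈ range (k + 1), f (2 * j) := by
  induction k with
  | zero => simp
  | succ k ih =>
    rw [show 2 * (k + 1) + 1 = 2 * k + 1 + 1 + 1 by ring, sum_range_succ, sum_range_succ, ih,
      hf _ (odd_two_mul_add_one k), add_zero, sum_range_succ _ (k + 1), mul_add, mul_one]

theorem add_pow_two_mul_add_sub_pow_two_mul {R : Type*} [CommRing R] (x y : R) (k : ℕ) :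
    (x + y) ^ (2 * k) + (x - y) ^ (2 * k) =
      ∑ j ∈ range (k + 1), 2 * x ^ (2 * j) * y ^ (2 * (k - j)) * (2 * k).choose (2 * j) := by
  rw [add_pow, sub_pow, ← sum_add_distrib, sum_range_two_mul_add_one_of_odd]
  · refine sum_congr rfl fun j hj => ?_
    rw [show 2 * j + 2 * k = 2 * (j + k) by ring, (even_two_mul _).neg_one_pow,
      show 2 * k - 2 * j = 2 * (k - j) by omega]
    ring
  · intro m hm
    rw [(hm.add_even (even_two_mul k)).neg_one_pow]
    ring

namespace Real

theorem rpow_mean_le_rpow_mean {ι : Type*} (s : Finset ι) {w X : ι → ℝ}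
    (hw : ∀ i ∈ s, 0 ≤ w i) (hw₁ : ∑ i ∈ s, w i = 1) (hX : ∀ i ∈ s, 0 ≤ X i) {p q : ℝ}
    (hp : 0 < p) (hpq : p ≤ q) :
    (∑ i ∈ s, w i * X i ^ p) ^ (1 / p) ≤ (∑ i ∈ s, w i * X i ^ q) ^ (1 / q) := by
  have hq : 0 < q := hp.trans_le hpq
  have hmean := arith_mean_le_rpow_mean s w (fun i => X i ^ p) hw hw₁
    (fun i hi => rpow_nonneg (hX i hi) p) ((one_le_div hp).mpr hpq)
  have hpow : ∑ i ∈ s, w i * (X i ^ p) ^ (q / p) = ∑ i ∈ s, w i * X i ^ q :=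
    sum_congr rfl fun i hi => by rw [← rpow_mul (hX i hi), mul_div_cancel₀ q hp.ne']
  rw [hpow] at hmean
  have hnonneg : 0 ≤ ∑ i ∈ s, w i * X i ^ q :=
    sum_nonneg fun i hi => mul_nonneg (hw i hi) (rpow_nonneg (hX i hi) q)
  calc (∑ i ∈ s, w i * X i ^ p) ^ (1 / p)
      ≤ ((∑ i ∈ s, w i * X i ^ q) ^ (1 / (q / p))) ^ (1 / p) :=
        rpow_le_rpow (sum_nonneg fun i hi => mul_nonneg (hw i hi) (rpow_nonneg (hX i hi) p))
          hmean (by positivity)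
    _ = (∑ i ∈ s, w i * X i ^ q) ^ (1 / q) := by
        rw [← rpow_mul hnonneg]
        field_simp

end Real

theorem sum_mul_sq_pow_three_le {ι : Type*} (s : Finset ι) {w X : ι → ℝ}
    (hw : ∀ i ∈ s, 0 ≤ w i) (hX : ∀ i ∈ s, 0 ≤ X i) :
    (∑ i ∈ s, w i * X i ^ 2) ^ 3 ≤ (∑ i ∈ s, w i * X i) ^ 2 * ∑ i ∈ s, w i * X i ^ 4 := by
  set m₁ := ∑ i ∈ s, w i * X i
  set m₂ := ∑ i ∈ s, w i * X i ^ 2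
  set m₃ := ∑ i ∈ s, w i * X i ^ 3
  set m₄ := ∑ i ∈ s, w i * X i ^ 4
  have hm₂ : 0 ≤ m₂ := sum_nonneg fun i hi => mul_nonneg (hw i hi) (pow_nonneg (hX i hi) 2)
  have h₁₃ : m₂ ^ 2 ≤ m₁ * m₃ := sum_sq_le_sum_mul_sum_of_sq_le_mul s
    (fun i hi => mul_nonneg (hw i hi) (hX i hi))
    (fun i hi => mul_nonneg (hw i hi) (pow_nonneg (hX i hi) 3)) fun i _ => le_of_eq (by ring)
  have h₂₄ : m₃ ^ 2 ≤ m₂ * m₄ := sum_sq_le_sum_mul_sum_of_sq_le_mul s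
    (fun i hi => mul_nonneg (hw i hi) (pow_nonneg (hX i hi) 2))
    (fun i hi => mul_nonneg (hw i hi) (pow_nonneg (hX i hi) 4)) fun i _ => le_of_eq (by ring)
  rcases hm₂.eq_or_lt with h0 | hpos
  · rw [← h0, zero_pow three_ne_zero]
    have : 0 ≤ m₄ := sum_nonneg fun i hi => mul_nonneg (hw i hi) (pow_nonneg (hX i hi) 4)
    positivity
  · have : m₂ ^ 3 * m₂ ≤ m₁ ^ 2 * m₄ * m₂ :=
      calc m₂ ^ 3 * m₂ = (m₂ ^ 2) ^ 2 := by ring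
        _ ≤ (m₁ * m₃) ^ 2 := pow_le_pow_left₀ (sq_nonneg _) h₁₃ 2
        _ = m₁ ^ 2 * m₃ ^ 2 := by ring
        _ ≤ m₁ ^ 2 * (m₂ * m₄) := mul_le_mul_of_nonneg_left h₂₄ (sq_nonneg _)
        _ = m₁ ^ 2 * m₄ * m₂ := by ring
    exact le_of_mul_le_mul_right this hpos

section Rademacher

variable {n : ℕ}

def signSum (a : Fin n → ℝ) (ε : Fin n → Bool) : ℝ :=
  ∑ i, (if ε i then 1 else -1) * a i

theorem signSum_cons (a : Fin (n + 1) → ℝ) (b : Bool) (ε : Fin n → Bool) :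
    signSum a (Fin.cons b ε) = signSum (Fin.tail a) ε + (if b then 1 else -1) * a 0 := by
  rw [signSum, Fin.sum_univ_succ, add_comm]
  rfl

theorem Fintype.sum_bool_fun_succ {M : Type*} [AddCommMonoid M]
    (g : (Fin (n + 1) → Bool) → M) :
    ∑ ε, g ε = ∑ ε : Fin n → Bool, (g (Fin.cons true ε) + g (Fin.cons false ε)) := by
  rw [← (Fin.consEquiv fun _ => Bool).sum_comp, Fintype.sum_prod_type, Fintype.sum_bool,
    sum_add_distrib]
  rfl

theorem sum_signSum_pow_succ (a : Fin (n + 1) → ℝ) (m : ℕ) :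
    ∑ ε, signSum a ε ^ m =
      ∑ ε, ((signSum (Fin.tail a) ε + a 0) ^ m + (signSum (Fin.tail a) ε - a 0) ^ m) := by
  rw [Fintype.sum_bool_fun_succ]
  simp only [signSum_cons, if_true, Bool.false_eq_true, if_false, one_mul, neg_one_mul,
    ← sub_eq_add_neg]

theorem sum_signSum_sq (a : Fin n → ℝ) : ∑ ε, signSum a ε ^ 2 = 2 ^ n * ∑ i, a i ^ 2 := by
  induction n with
  | zero => simp [signSum]
  | succ n ih =>
    have hpar : ∀ x y : ℝ, (x + y) ^ 2 + (x - y) ^ 2 = 2 * x ^ 2 + 2 * y ^ 2 := fun x y => by ring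
    simp only [sum_signSum_pow_succ, hpar, sum_add_distrib, ← mul_sum, ih, sum_const, card_univ,
      Fintype.card_fun, Fintype.card_bool, Fintype.card_fin, nsmul_eq_mul, Fin.tail_def]
    rw [Fin.sum_univ_succ (fun i => a i ^ 2)]
    push_cast
    ring

theorem sum_signSum_pow_two_mul_le (a : Fin n → ℝ) (k : ℕ) :
    ∑ ε, signSum a ε ^ (2 * k) ≤ 2 ^ n * (2 * k)! * (∑ i, a i ^ 2) ^ k := by
  induction n generalizing k with
  | zero => rcases k with _ | k <;> simp [signSum]
  | succ n ih =>
    rw [sum_signSum_pow_succ]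
    simp only [add_pow_two_mul_add_sub_pow_two_mul]
    rw [sum_comm, Fin.sum_univ_succ (fun i => a i ^ 2), add_comm (a 0 ^ 2), add_pow, mul_sum]
    set T := signSum (Fin.tail a)
    set Q := ∑ i : Fin n, a i.succ ^ 2
    refine sum_le_sum fun j hj => ?_
    have hjk : j ≤ k := Nat.lt_succ_iff.mp (mem_range.mp hj)
    have hchoose : ((2 * k).choose (2 * j) : ℝ) * (2 * j)! ≤ (2 * k)! * k.choose j :=
      calc ((2 * k).choose (2 * j) : ℝ) * (2 * j)! ≤ (2 * k)! := by
            exact_mod_cast Nat.choose_mul_factorial_le_factorial _ _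
        _ ≤ (2 * k)! * k.choose j :=
            le_mul_of_one_le_right (by positivity) (by exact_mod_cast Nat.choose_pos hjk)
    calc ∑ ε, 2 * T ε ^ (2 * j) * a 0 ^ (2 * (k - j)) * (2 * k).choose (2 * j)
        = 2 * (a 0 ^ 2) ^ (k - j) * (2 * k).choose (2 * j) * ∑ ε, T ε ^ (2 * j) := by
          rw [mul_sum]
          exact sum_congr rfl fun ε _ => by rw [pow_mul]; ring
      _ ≤ 2 * (a 0 ^ 2) ^ (k - j) * (2 * k).choose (2 * j) * (2 ^ n * (2 * j)! * Q ^ j) := by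
          gcongr
          exact ih _ _
      _ = 2 ^ (n + 1) * (a 0 ^ 2) ^ (k - j) * Q ^ j *
            (((2 * k).choose (2 * j) : ℝ) * (2 * j)!) := by
          ring
      _ ≤ 2 ^ (n + 1) * (a 0 ^ 2) ^ (k - j) * Q ^ j * ((2 * k)! * k.choose j) := by
          gcongr
      _ = 2 ^ (n + 1) * (2 * k)! * (Q ^ j * (a 0 ^ 2) ^ (k - j) * k.choose j) := by ring

noncomputable def signMoment (a : Fin n → ℝ) (p : ℝ) : ℝ :=
  ((2 : ℝ) ^ n)⁻¹ * ∑ ε, |signSum a ε| ^ p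

variable (a : Fin n → ℝ)

theorem signMoment_nonneg (p : ℝ) : 0 ≤ signMoment a p := by
  unfold signMoment
  positivity

theorem signMoment_rpow_le_rpow {p q : ℝ} (hp : 0 < p) (hpq : p ≤ q) :
    signMoment a p ^ (1 / p) ≤ signMoment a q ^ (1 / q) := by
  have hw : ∑ _ε : Fin n → Bool, ((2 : ℝ) ^ n)⁻¹ = 1 := by simp
  simpa only [signMoment, mul_sum] using Real.rpow_mean_le_rpow_mean univ
    (fun _ _ => by positivity) hw (fun ε _ => abs_nonneg (signSum a ε)) hp hpq

theorem signMoment_natCast (m : ℕ) :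
    signMoment a m = ((2 : ℝ) ^ n)⁻¹ * ∑ ε, |signSum a ε| ^ m := by
  simp only [signMoment, Real.rpow_natCast]

theorem signMoment_one : signMoment a 1 = ((2 : ℝ) ^ n)⁻¹ * ∑ ε, |signSum a ε| := by
  simp only [signMoment, Real.rpow_one]

theorem signMoment_natCast_of_even {m : ℕ} (hm : Even m) :
    signMoment a m = ((2 : ℝ) ^ n)⁻¹ * ∑ ε, signSum a ε ^ m := by
  simp only [signMoment_natCast, hm.pow_abs]

theorem signMoment_two : signMoment a 2 = ∑ i, a i ^ 2 := by
  rw [← Nat.cast_ofNat, signMoment_natCast_of_even a even_two, sum_signSum_sq,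
    inv_mul_cancel_left₀]
  positivity

theorem signMoment_two_mul_le (k : ℕ) :
    signMoment a (2 * k) ≤ (2 * k)! * (∑ i, a i ^ 2) ^ k := by
  rw [← Nat.cast_two, ← Nat.cast_mul, signMoment_natCast_of_even a (even_two_mul k),
    inv_mul_le_iff₀ (by positivity), ← mul_assoc]
  exact sum_signSum_pow_two_mul_le a k

theorem signMoment_two_pow_three_le :
    signMoment a 2 ^ 3 ≤ signMoment a 1 ^ 2 * signMoment a 4 := by
  have key := sum_mul_sq_pow_three_le univ (fun _ _ => by positivity)
    (fun ε _ => abs_nonneg (signSum a ε)) (w := fun _ => ((2 : ℝ) ^ n)⁻¹)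
  simp only [← mul_sum, ← signMoment_natCast, ← signMoment_one] at key
  exact_mod_cast key

theorem sqrt_sum_sq_le_signMoment_one : √(∑ i, a i ^ 2) ≤ √24 * signMoment a 1 := by
  set Q := ∑ i, a i ^ 2
  have h4 : signMoment a 4 ≤ 24 * Q ^ 2 := by
    have h := signMoment_two_mul_le a 2
    norm_num [Nat.factorial] at h
    exact h
  have h : Q ^ 2 * Q ≤ Q ^ 2 * (24 * signMoment a 1 ^ 2) :=
    calc Q ^ 2 * Q = signMoment a 2 ^ 3 := by rw [signMoment_two]; ring
      _ ≤ signMoment a 1 ^ 2 * signMoment a 4 := signMoment_two_pow_three_le a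
      _ ≤ signMoment a 1 ^ 2 * (24 * Q ^ 2) := by gcongr
      _ = Q ^ 2 * (24 * signMoment a 1 ^ 2) := by ring
  rcases (show 0 ≤ Q by positivity).eq_or_lt with hQ | hQ
  · rw [← hQ, Real.sqrt_zero]
    exact mul_nonneg (Real.sqrt_nonneg _) (signMoment_nonneg a 1)
  · rw [Real.sqrt_le_iff, mul_pow, Real.sq_sqrt (by norm_num)]
    exact ⟨mul_nonneg (Real.sqrt_nonneg _) (signMoment_nonneg a 1),
      le_of_mul_le_mul_left h (by positivity)⟩

theorem signMoment_rpow_le {p : ℝ} {k : ℕ} (hp : 0 < p) (hpk : p ≤ 2 * k) :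
    signMoment a p ^ (1 / p) ≤ ((2 * k)! : ℝ) ^ (1 / (2 * k : ℝ)) * √(∑ i, a i ^ 2) := by
  have hk : (0 : ℝ) < k := by linarith
  have hQ : 0 ≤ ∑ i, a i ^ 2 := by positivity
  calc signMoment a p ^ (1 / p) ≤ signMoment a (2 * k) ^ (1 / (2 * k : ℝ)) :=
        signMoment_rpow_le_rpow a hp hpk
    _ ≤ ((2 * k)! * (∑ i, a i ^ 2) ^ k) ^ (1 / (2 * k : ℝ)) := by
        gcongr
        · exact signMoment_nonneg a _
        · exact signMoment_two_mul_le a k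
    _ = ((2 * k)! : ℝ) ^ (1 / (2 * k : ℝ)) * √(∑ i, a i ^ 2) := by
        rw [Real.mul_rpow (by positivity) (by positivity), ← Real.rpow_natCast,
          ← Real.rpow_mul hQ, Real.sqrt_eq_rpow]
        congr 2
        field_simp

end Rademacher

/-- Khinchine's inequality. -/
theorem khinchine (p : ℝ) (hp : 1 ≤ p) :
    ∃ A B : ℝ, 0 < A ∧ 0 < B ∧
      ∀ (n : ℕ) (a : Fin n → ℝ),
        A * Real.sqrt (∑ i, (a i) ^ 2) ≤
          (((2 : ℝ) ^ n)⁻¹ *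
            ∑ ε : Fin n → Bool, |∑ i, (if ε i then (1 : ℝ) else -1) * a i| ^ p) ^ (1 / p) ∧
        (((2 : ℝ) ^ n)⁻¹ *
            ∑ ε : Fin n → Bool, |∑ i, (if ε i then (1 : ℝ) else -1) * a i| ^ p) ^ (1 / p) ≤
          B * Real.sqrt (∑ i, (a i) ^ 2) := by
  obtain ⟨k, hpk⟩ : ∃ k : ℕ, p ≤ 2 * k := ⟨⌈p / 2⌉₊, by linarith [Nat.le_ceil (p / 2)]⟩
  refine ⟨(√24)⁻¹, ((2 * k)! : ℝ) ^ (1 / (2 * k : ℝ)), by positivity, by positivity,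
    fun n a => ⟨?_, signMoment_rpow_le a (by linarith) hpk⟩⟩
  calc (√24)⁻¹ * √(∑ i, a i ^ 2) ≤ signMoment a 1 :=
        (inv_mul_le_iff₀ (by positivity)).2 (sqrt_sum_sq_le_signMoment_one a)
    _ = signMoment a 1 ^ (1 / 1 : ℝ) := by rw [div_one, Real.rpow_one]
    _ ≤ signMoment a p ^ (1 / p) := signMoment_rpow_le_rpow a one_pos hp
end

section
/- Subsequence splitting lemma: every bounded sequence {f_j} in L_1[0,1] has a subsequence {f_{j_k}} and pairwise disjoint measurable sets {A_k} such that {f_{j_k} · 1_{A_k^c}} is equi-integrable. -/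
/-!
Work with `F j = |f j|` and the mass `tailMass μ F n j = ∫_{F j > n} F j` above level `n`; let
`a = tailConcentration μ F = inf_n limsup_j tailMass μ F n j` be the mass escaping to infinity.
Choose inductively levels `n_m` and indices `j_m` such that `F (j_m)` carries at least about `a`
above `n_m`, while every later function carries at most about `a` above each earlier level `n_i`;
hence for `l < k` the function `F (j_k)` has mass at most about `2⁻ˡ` between the levels `n_l`
and `n_k`. Choosing `n_m` large also makes `A_m = {F (j_m) > n_m}` so small (by Chebyshev) that
every earlier `F (j_i)` has mass at most `2⁻ᵐ` on it, so removing the later sets `A_i` from `A_k`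
costs at most `∑_{i > k} 2⁻ⁱ`. Outside the resulting disjoint sets `B_k`, the function `F (j_k)`
is therefore bounded by `n_l` up to a small mass, and the finitely many `k ≤ l` are handled by
absolute continuity of the integral.
-/

open MeasureTheory Filter Set
open scoped ENNReal NNReal

theorem exists_seq_forall_fin_exists {α : Type*} {P : (m : ℕ) → (Fin m → α) → α → Prop}
    (h : ∀ m prev, ∃ x, P m prev x) : ∃ s : ℕ → α, ∀ m, P m (fun i => s i) (s m) := by
  let s : ℕ → α := Nat.strongRec fun m prev => (h m fun i => prev i i.2).choose
  refine ⟨s, fun m => ?_⟩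
  rw [show s m = (h m fun i => s i).choose from Nat.strongRec_eq _ m]
  exact (h m _).choose_spec

theorem Set.pairwise_disjoint_diff_iUnion_add {α : Type*} (A : ℕ → Set α) :
    Pairwise (Function.onFun Disjoint fun k => A k \ ⋃ i, A (k + 1 + i)) := by
  refine (pairwise_disjoint_on _).2 fun k l hkl => disjoint_left.2 fun x hxk hxl => ?_
  refine hxk.2 (mem_iUnion.2 ⟨l - (k + 1), ?_⟩)
  rw [Nat.add_sub_cancel' hkl]
  exact hxl.1

theorem ENNReal.frequently_le_add_of_le_limsup {u : ℕ → ℝ≥0∞} {b τ : ℝ≥0∞} (hb : b ≠ ∞)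
    (hτ : τ ≠ 0) (hbu : b ≤ limsup u atTop) : ∃ᶠ j in atTop, b ≤ u j + τ := by
  rcases eq_or_ne b 0 with rfl | hb₀
  · exact Frequently.of_forall fun _ => zero_le
  refine (frequently_lt_of_lt_limsup (by isBoundedDefault)
    ((ENNReal.sub_lt_self hb hb₀ hτ).trans_le hbu)).mono fun j hj => ?_
  exact tsub_le_iff_right.1 hj.le

namespace MeasureTheory

variable {α : Type*} {F : ℕ → α → ℝ≥0∞}

def superlevel (F : ℕ → α → ℝ≥0∞) (n j : ℕ) : Set α := {x | (n : ℝ≥0∞) < F j x}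

theorem superlevel_subset_superlevel {n n' : ℕ} (h : n ≤ n') (j : ℕ) :
    superlevel F n' j ⊆ superlevel F n j :=
  fun x (hx : (n' : ℝ≥0∞) < F j x) => lt_of_le_of_lt (by exact_mod_cast h) hx

variable [MeasurableSpace α] {μ : Measure α}

theorem exists_forall_setLIntegral_le_of_finite {ι : Type*} [Finite ι] {f : ι → α → ℝ≥0∞}
    (hf : ∀ i, ∫⁻ x, f i x ∂μ ≠ ∞) {ε : ℝ≥0∞} (hε : ε ≠ 0) :
    ∃ δ ≠ 0, ∀ i s, μ s ≤ δ → ∫⁻ x in s, f i x ∂μ ≤ ε := by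
  choose δ hδ hδε using fun i => exists_pos_setLIntegral_lt_of_measure_lt (hf i) hε
  rcases isEmpty_or_nonempty ι with _ | _
  · exact ⟨1, one_ne_zero, fun i => isEmptyElim i⟩
  obtain ⟨i₀, hi₀⟩ := Finite.exists_min δ
  obtain ⟨δ', hδ'₀, hδ'⟩ := exists_between (hδ i₀)
  exact ⟨δ', hδ'₀.ne', fun i s hs => (hδε i s (hs.trans_lt (hδ'.trans_le (hi₀ i)))).le⟩

theorem measurableSet_superlevel (hF : ∀ j, Measurable (F j)) (n j : ℕ) :
    MeasurableSet (superlevel F n j) :=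
  measurableSet_lt measurable_const (hF j)

theorem exists_forall_measure_superlevel_le (hF : ∀ j, Measurable (F j)) {C : ℝ≥0}
    (hC : ∀ j, ∫⁻ x, F j x ∂μ ≤ C) {δ : ℝ≥0∞} (hδ : δ ≠ 0) :
    ∃ N : ℕ, ∀ n ≥ N, ∀ j, μ (superlevel F n j) ≤ δ := by
  obtain ⟨N, hN⟩ := ENNReal.exists_nat_mul_gt hδ ENNReal.coe_ne_top
  have hN₀ : N ≠ 0 := by
    rintro rfl
    simp at hN
  refine ⟨N, fun n hn j => ?_⟩
  have hn₀ : (n : ℝ≥0∞) ≠ 0 := Nat.cast_ne_zero.2 (by omega)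
  refine (ENNReal.mul_le_mul_iff_right hn₀ (ENNReal.natCast_ne_top n)).1 ?_
  calc (n : ℝ≥0∞) * μ (superlevel F n j) ≤ n * μ {x | (n : ℝ≥0∞) ≤ F j x} := by
        gcongr
        exact fun x (hx : (n : ℝ≥0∞) < F j x) => hx.le
    _ ≤ C := (mul_meas_ge_le_lintegral (hF j) n).trans (hC j)
    _ ≤ N * δ := hN.le
    _ ≤ n * δ := by gcongr

noncomputable def tailMass (μ : Measure α) (F : ℕ → α → ℝ≥0∞) (n j : ℕ) : ℝ≥0∞ :=
  ∫⁻ x in superlevel F n j, F j x ∂μ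

noncomputable def limsupTailMass (μ : Measure α) (F : ℕ → α → ℝ≥0∞) (n : ℕ) : ℝ≥0∞ :=
  limsup (tailMass μ F n) atTop

noncomputable def tailConcentration (μ : Measure α) (F : ℕ → α → ℝ≥0∞) : ℝ≥0∞ :=
  ⨅ n, limsupTailMass μ F n

theorem setLIntegral_diff_add_tailMass (hF : ∀ j, Measurable (F j)) {n n' : ℕ} (h : n ≤ n')
    (j : ℕ) :
    ∫⁻ x in superlevel F n j \ superlevel F n' j, F j x ∂μ + tailMass μ F n' j =
      tailMass μ F n j := by
  rw [tailMass, tailMass, ← lintegral_union (measurableSet_superlevel hF n' j)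
    disjoint_sdiff_left, sdiff_union_of_subset (superlevel_subset_superlevel h j)]

theorem tailMass_le {C : ℝ≥0∞} (hC : ∀ j, ∫⁻ x, F j x ∂μ ≤ C) (n j : ℕ) :
    tailMass μ F n j ≤ C :=
  (setLIntegral_le_lintegral _ _).trans (hC j)

theorem antitone_limsupTailMass : Antitone (limsupTailMass μ F) :=
  fun _ _ h => limsup_le_limsup (Eventually.of_forall fun j =>
    lintegral_mono_set (superlevel_subset_superlevel h j))

theorem limsupTailMass_le {C : ℝ≥0∞} (hC : ∀ j, ∫⁻ x, F j x ∂μ ≤ C) (n : ℕ) :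
    limsupTailMass μ F n ≤ C :=
  limsup_le_of_le (by isBoundedDefault) (Eventually.of_forall (tailMass_le hC n))

/-- `p = (n_m, j_m)` is the `m`-th level and index, `prev` lists the earlier pairs. -/
def SplittingStep (μ : Measure α) (F : ℕ → α → ℝ≥0∞) (m : ℕ) (prev : Fin m → ℕ × ℕ)
    (p : ℕ × ℕ) : Prop :=
  limsupTailMass μ F p.1 ≤ tailConcentration μ F + 2⁻¹ ^ m ∧
  tailConcentration μ F ≤ tailMass μ F p.1 p.2 + 2⁻¹ ^ m ∧
  ∀ i, (prev i).1 < p.1 ∧ (prev i).2 < p.2 ∧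
    tailMass μ F (prev i).1 p.2 ≤ limsupTailMass μ F (prev i).1 + 2⁻¹ ^ m ∧
    ∫⁻ x in superlevel F p.1 p.2, F (prev i).2 x ∂μ ≤ 2⁻¹ ^ m

theorem exists_splittingStep (hF : ∀ j, Measurable (F j)) {C : ℝ≥0}
    (hC : ∀ j, ∫⁻ x, F j x ∂μ ≤ C) (m : ℕ) (prev : Fin m → ℕ × ℕ) :
    ∃ p, SplittingStep μ F m prev p := by
  have hτ : (2⁻¹ : ℝ≥0∞) ^ m ≠ 0 := by simp
  have hlim (n : ℕ) : limsupTailMass μ F n ≠ ∞ :=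
    ne_top_of_le_ne_top ENNReal.coe_ne_top (limsupTailMass_le hC n)
  have hconc_ne_top : tailConcentration μ F ≠ ∞ := ne_top_of_le_ne_top (hlim 0) (iInf_le _ 0)
  obtain ⟨δ, hδ, hδτ⟩ := exists_forall_setLIntegral_le_of_finite
    (fun i => ne_top_of_le_ne_top ENNReal.coe_ne_top (hC (prev i).2)) hτ
  obtain ⟨N, hN⟩ := exists_forall_measure_superlevel_le hF hC hδ
  obtain ⟨n₀, hn₀⟩ : ∃ n₀, limsupTailMass μ F n₀ < tailConcentration μ F + 2⁻¹ ^ m :=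
    iInf_lt_iff.1 (ENNReal.lt_add_right hconc_ne_top hτ)
  set n := max (max N n₀) (Finset.univ.sup (fun i => (prev i).1) + 1)
  have hprev_lt (i : Fin m) : (prev i).1 < n :=
    Nat.lt_of_lt_of_le (Nat.lt_succ_of_le (Finset.le_sup (f := fun i => (prev i).1)
      (Finset.mem_univ i))) (le_max_right _ _)
  have hlarge : ∀ᶠ j in atTop, ∀ i, (prev i).2 < j ∧
      tailMass μ F (prev i).1 j ≤ limsupTailMass μ F (prev i).1 + 2⁻¹ ^ m :=
    eventually_all.2 fun i => (eventually_gt_atTop _).and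
      ((eventually_lt_of_limsup_lt (ENNReal.lt_add_right (hlim _) hτ)).mono fun _ => le_of_lt)
  have hconc : ∃ᶠ j in atTop, tailConcentration μ F ≤ tailMass μ F n j + 2⁻¹ ^ m :=
    ENNReal.frequently_le_add_of_le_limsup hconc_ne_top hτ (iInf_le _ n)
  obtain ⟨j, hj, hjconc⟩ := (hlarge.and_frequently hconc).exists
  refine ⟨(n, j), (antitone_limsupTailMass ((le_max_right _ _).trans (le_max_left _ _))).trans
    hn₀.le, hjconc, fun i => ⟨hprev_lt i, (hj i).1, (hj i).2, ?_⟩⟩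
  exact hδτ i _ (hN n ((le_max_left _ _).trans (le_max_left _ _)) j)

def splittingSet (F : ℕ → α → ℝ≥0∞) (s : ℕ → ℕ × ℕ) (k : ℕ) : Set α :=
  superlevel F (s k).1 (s k).2 \ ⋃ i, superlevel F (s (k + 1 + i)).1 (s (k + 1 + i)).2

section SplittingSequence

variable {s : ℕ → ℕ × ℕ} (hs : ∀ m, SplittingStep μ F m (fun i => s i) (s m))
include hs

theorem setLIntegral_iUnion_superlevel_le (k : ℕ) :
    ∫⁻ x in ⋃ i, superlevel F (s (k + 1 + i)).1 (s (k + 1 + i)).2, F (s k).2 x ∂μ ≤ 2⁻¹ ^ k :=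
  calc _ ≤ ∑' i, ∫⁻ x in superlevel F (s (k + 1 + i)).1 (s (k + 1 + i)).2, F (s k).2 x ∂μ :=
        lintegral_iUnion_le _ _
    _ ≤ ∑' i, (2⁻¹ : ℝ≥0∞) ^ (k + 1 + i) :=
        ENNReal.tsum_le_tsum fun i => ((hs (k + 1 + i)).2.2 ⟨k, by omega⟩).2.2.2
    _ = 2⁻¹ ^ k := by
        simp_rw [pow_add, ENNReal.tsum_mul_left, ENNReal.tsum_geometric, ENNReal.one_sub_inv_two,
          pow_one]
        rw [mul_assoc, ENNReal.mul_inv_cancel (by norm_num) (by norm_num), mul_one]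

theorem setLIntegral_diff_superlevel_le (hF : ∀ j, Measurable (F j)) {C : ℝ≥0}
    (hC : ∀ j, ∫⁻ x, F j x ∂μ ≤ C) {l k : ℕ} (hlk : l < k) :
    ∫⁻ x in superlevel F (s l).1 (s k).2 \ superlevel F (s k).1 (s k).2, F (s k).2 x ∂μ ≤
      2⁻¹ ^ l + 2 * 2⁻¹ ^ k := by
  obtain ⟨hl_conc, -, -⟩ := hs l
  obtain ⟨-, hk_conc, hk_prev⟩ := hs k
  obtain ⟨hn_lt, -, hk_tail, -⟩ := hk_prev ⟨l, hlk⟩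
  refine ENNReal.le_of_add_le_add_right
    (ne_top_of_le_ne_top ENNReal.coe_ne_top (tailMass_le (μ := μ) hC (s k).1 (s k).2)) ?_
  calc _ = tailMass μ F (s l).1 (s k).2 := setLIntegral_diff_add_tailMass hF hn_lt.le (s k).2
    _ ≤ limsupTailMass μ F (s l).1 + 2⁻¹ ^ k := hk_tail
    _ ≤ tailConcentration μ F + 2⁻¹ ^ l + 2⁻¹ ^ k := by gcongr
    _ ≤ tailMass μ F (s k).1 (s k).2 + 2⁻¹ ^ k + 2⁻¹ ^ l + 2⁻¹ ^ k := by gcongr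
    _ = _ := by ring

theorem setLIntegral_inter_compl_splittingSet_le (hF : ∀ j, Measurable (F j)) {C : ℝ≥0}
    (hC : ∀ j, ∫⁻ x, F j x ∂μ ≤ C) {l k : ℕ} (hlk : l < k) (S : Set α) :
    ∫⁻ x in S ∩ (splittingSet F s k)ᶜ, F (s k).2 x ∂μ ≤ (s l).1 * μ S + 4 * 2⁻¹ ^ l := by
  set j := (s k).2
  set n := (s l).1
  set U := ⋃ i, superlevel F (s (k + 1 + i)).1 (s (k + 1 + i)).2
  have hcover : S ∩ (splittingSet F s k)ᶜ ⊆
      (S ∩ {x | F j x ≤ n}) ∪ (superlevel F n j \ superlevel F (s k).1 j) ∪ U := by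
    rintro x ⟨hxS, hxB⟩
    by_cases hsmall : F j x ≤ n
    · exact Or.inl (Or.inl ⟨hxS, hsmall⟩)
    by_cases hbig : x ∈ superlevel F (s k).1 j
    · exact Or.inr (by_contra fun hU => hxB ⟨hbig, hU⟩)
    · exact Or.inl (Or.inr ⟨not_le.1 hsmall, hbig⟩)
  have hτ : (2⁻¹ : ℝ≥0∞) ^ k ≤ 2⁻¹ ^ l := pow_le_pow_right_of_le_one' (by norm_num) hlk.le
  calc _ ≤ ∫⁻ x in (S ∩ {x | F j x ≤ n}) ∪ (superlevel F n j \ superlevel F (s k).1 j) ∪ U,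
          F j x ∂μ := lintegral_mono_set hcover
    _ ≤ ∫⁻ x in S ∩ {x | F j x ≤ n}, F j x ∂μ +
          ∫⁻ x in superlevel F n j \ superlevel F (s k).1 j, F j x ∂μ + ∫⁻ x in U, F j x ∂μ :=
        (lintegral_union_le _ _ _).trans (add_le_add_left (lintegral_union_le _ _ _) _)
    _ ≤ n * μ S + (2⁻¹ ^ l + 2 * 2⁻¹ ^ k) + 2⁻¹ ^ k := by
        gcongr
        · calc _ ≤ ∫⁻ _ in S ∩ {x | F j x ≤ n}, (n : ℝ≥0∞) ∂μ :=
                setLIntegral_mono measurable_const fun x hx => hx.2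
            _ ≤ n * μ S := by
                rw [setLIntegral_const]
                gcongr
                exact inter_subset_left
        · exact setLIntegral_diff_superlevel_le hs hF hC hlk
        · exact setLIntegral_iUnion_superlevel_le hs k
    _ ≤ n * μ S + (2⁻¹ ^ l + 2 * 2⁻¹ ^ l) + 2⁻¹ ^ l := by gcongr
    _ = _ := by ring

end SplittingSequence

theorem exists_subseq_setLIntegral_inter_compl_le
    (hF : ∀ j, Measurable (F j)) {C : ℝ≥0} (hC : ∀ j, ∫⁻ x, F j x ∂μ ≤ C) :
    ∃ (φ : ℕ → ℕ) (B : ℕ → Set α), StrictMono φ ∧ (∀ k, MeasurableSet (B k)) ∧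
      Pairwise (Function.onFun Disjoint B) ∧
      ∀ ε ≠ 0, ∃ δ ≠ 0, ∀ k S, μ S ≤ δ → ∫⁻ x in S ∩ (B k)ᶜ, F (φ k) x ∂μ ≤ ε := by
  obtain ⟨s, hs⟩ := exists_seq_forall_fin_exists (exists_splittingStep hF hC)
  refine ⟨fun k => (s k).2, splittingSet F s,
    strictMono_nat_of_lt_succ fun k => ((hs (k + 1)).2.2 ⟨k, k.lt_succ_self⟩).2.1,
    fun k => (measurableSet_superlevel hF _ _).diff
      (MeasurableSet.iUnion fun _ => measurableSet_superlevel hF _ _),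
    pairwise_disjoint_diff_iUnion_add _, fun ε hε => ?_⟩
  have hsmall : Tendsto (fun l : ℕ => 4 * (2⁻¹ : ℝ≥0∞) ^ l) atTop (nhds 0) := by
    simpa using ENNReal.Tendsto.const_mul
      (ENNReal.tendsto_pow_atTop_nhds_zero_of_lt_one (by norm_num)) (Or.inr ENNReal.ofNat_ne_top)
  obtain ⟨l, hl⟩ := ((tendsto_order.1 hsmall).2 _ (ENNReal.half_pos hε)).exists
  obtain ⟨δ, hδ, hδε⟩ := exists_forall_setLIntegral_le_of_finite
    (f := fun k : Fin (l + 1) => F (s k).2)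
    (fun k => ne_top_of_le_ne_top ENNReal.coe_ne_top (hC _)) hε
  refine ⟨min δ (ε / 2 / (s l).1), (lt_min (pos_iff_ne_zero.2 hδ)
    (ENNReal.div_pos (ENNReal.half_pos hε).ne' (ENNReal.natCast_ne_top _))).ne',
    fun k S hS => ?_⟩
  rcases le_or_gt k l with hkl | hlk
  · exact (lintegral_mono_set inter_subset_left).trans
      (hδε ⟨k, Nat.lt_succ_of_le hkl⟩ S (hS.trans (min_le_left _ _)))
  calc _ ≤ (s l).1 * μ S + 4 * 2⁻¹ ^ l := setLIntegral_inter_compl_splittingSet_le hs hF hC hlk S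
    _ ≤ ε / 2 + ε / 2 := by
        gcongr
        exact (mul_le_mul_right (hS.trans (min_le_right _ _)) _).trans ENNReal.mul_div_le
    _ = ε := ENNReal.add_halves ε

theorem eLpNorm_one_indicator_eq_setLIntegral {E : Type*} [NormedAddCommGroup E] {g : α → E}
    {S : Set α} (hS : MeasurableSet S) : eLpNorm (S.indicator g) 1 μ = ∫⁻ x in S, ‖g x‖ₑ ∂μ := by
  rw [eLpNorm_indicator_eq_eLpNorm_restrict hS, eLpNorm_one_eq_lintegral_enorm]

theorem exists_subseq_unifIntegrable_indicator_compl {E : Type*} [NormedAddCommGroup E]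
    {g : ℕ → α → E} (hg : ∀ j, AEStronglyMeasurable (g j) μ) {C : ℝ≥0}
    (hC : ∀ j, eLpNorm (g j) 1 μ ≤ C) :
    ∃ (φ : ℕ → ℕ) (B : ℕ → Set α), StrictMono φ ∧ (∀ k, MeasurableSet (B k)) ∧
      Pairwise (Function.onFun Disjoint B) ∧
      UnifIntegrable (fun k => (B k)ᶜ.indicator (g (φ k))) 1 μ := by
  obtain ⟨φ, B, hφ, hB, hdisj, hsmall⟩ := exists_subseq_setLIntegral_inter_compl_le
    (F := fun j x => ‖(hg j).mk _ x‖ₑ) (fun j => (hg j).stronglyMeasurable_mk.enorm)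
    fun j => by
      rw [← eLpNorm_one_eq_lintegral_enorm, ← eLpNorm_congr_ae (hg j).ae_eq_mk]
      exact hC j
  refine ⟨φ, B, hφ, hB, hdisj, (unifIntegrable_congr_ae
    (g := fun k => (B k)ᶜ.indicator ((hg (φ k)).mk _)) fun k => ?_).2 fun ε hε => ?_⟩
  · filter_upwards [(hg (φ k)).ae_eq_mk] with x hx
    simp only [Set.indicator, hx]
  obtain ⟨δ, hδ, hδε⟩ := hsmall _ (ENNReal.ofReal_pos.2 hε).ne'
  obtain ⟨r, -, hr₀, hrδ⟩ := ENNReal.lt_iff_exists_real_btwn.1 (pos_iff_ne_zero.2 hδ)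
  refine ⟨r, ENNReal.ofReal_pos.1 hr₀, fun k S hS hμS => ?_⟩
  rw [indicator_indicator, eLpNorm_one_indicator_eq_setLIntegral (hS.inter (hB k).compl)]
  exact hδε k S (hμS.trans hrδ.le)

end MeasureTheory

/-- Subsequence splitting lemma: every bounded sequence in `L¹[0,1]` has a subsequence
`{f_{j_k}}` and pairwise disjoint measurable sets `{A_k}` such that `{f_{j_k}·1_{A_kᶜ}}`
is equi-integrable. -/
theorem subsequence_splitting (f : ℕ → ℝ → ℝ)
    (hint : ∀ j, Integrable (f j) (volume.restrict (Set.Icc (0 : ℝ) 1)))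
    (M : ℝ)
    (hbdd : ∀ j, ∫ x, |f j x| ∂(volume.restrict (Set.Icc (0 : ℝ) 1)) ≤ M) :
    ∃ (φ : ℕ → ℕ) (A : ℕ → Set ℝ),
      StrictMono φ ∧
      (∀ k, MeasurableSet (A k)) ∧
      Pairwise (Function.onFun Disjoint A) ∧
      (∀ ε : ℝ, 0 < ε → ∃ δ : ℝ, 0 < δ ∧
        ∀ S : Set ℝ, MeasurableSet S → volume S ≤ ENNReal.ofReal δ →
          ∀ k, ∫ x in S ∩ (A k)ᶜ, |f (φ k) x|
            ∂(volume.restrict (Set.Icc (0 : ℝ) 1)) < ε) := by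
  set μ := volume.restrict (Set.Icc (0 : ℝ) 1)
  have hbdd' (j : ℕ) : eLpNorm (f j) 1 μ ≤ M.toNNReal := by
    rw [eLpNorm_one_eq_lintegral_enorm, ← ofReal_integral_norm_eq_lintegral_enorm (hint j)]
    exact ENNReal.ofReal_le_ofReal (hbdd j)
  obtain ⟨φ, A, hφ, hA, hdisj, hunif⟩ :=
    exists_subseq_unifIntegrable_indicator_compl (fun j => (hint j).aestronglyMeasurable) hbdd'
  refine ⟨φ, A, hφ, hA, hdisj, fun ε hε => ?_⟩
  obtain ⟨δ, hδ, hδε⟩ := hunif (half_pos hε)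
  refine ⟨δ, hδ, fun S hS hvol k => ?_⟩
  have hnorm := hδε k S hS ((Measure.restrict_apply_le _ S).trans hvol)
  rw [indicator_indicator, eLpNorm_one_indicator_eq_setLIntegral (hS.inter (hA k).compl),
    ← ofReal_integral_norm_eq_lintegral_enorm (hint (φ k)).integrableOn,
    ENNReal.ofReal_le_ofReal_iff (half_pos hε).le] at hnorm
  exact hnorm.trans_lt (half_lt_self hε)
end
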